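/- arXiv:1201.1209 — 2 statements merged into one kernel-verified Lean document; each statement's English description precedes it below -/
import Mathlib

section
/- There exist constants C > 0 and a > 0 such that for all 0 < t ≤ 1, all x, y ∈ ℝ^d and all 1 ≤ i, j ≤ d, |y_j · ∂k_t^0/∂y_i (x,y)| ≤ C t^{−d/2−1} e^{−(a/t)|x−y|²}. -/
/-!
Write `τ = tanh t`, `κ = coth t`, `u = |x + y|`, `v = |x - y|` and `R = τ u² + κ v²`, so that
`k_t^0 = (2π sinh 2t)^{-d/2} e^{-R/4}` and `∂_{y_i} k_t^0 = -½ (τ (x+y)_i - κ (x-y)_i) k_t^0`.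
Since `2y = (x+y) - (x-y)`, the product `|y_j ∂_{y_i} k_t^0|` is at most
`¼ (u + v)(τ u + κ v) k_t^0`. As `τ κ = 1` and `κ ≥ 1`, AM-GM gives `2uv ≤ R` and hence
`(u + v)(τ u + κ v) ≤ (1 + κ) R`. Half of the Gaussian absorbs `R` (`R e^{-R/8} ≤ 8`), the other
half is at most `e^{-v²/(8t)}` because `κ ≥ 1/t`, and `1 + κ ≤ 3/t`, `sinh 2t ≥ 2t` for `t ≤ 1`.
-/

open Real

/-- The classical Hermite (Mehler) heat kernel on `ℝ^d`:
`k_t^0(x,y) = (2π sinh(2t))^{-d/2} exp(-(1/4)(tanh(t)|x+y|² + coth(t)|x-y|²))`,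
where `coth t = cosh t / sinh t`. -/
noncomputable def mehlerKernel (d : ℕ) (t : ℝ) (x y : EuclideanSpace ℝ (Fin d)) : ℝ :=
  (2 * Real.pi * Real.sinh (2 * t)) ^ (-(d : ℝ) / 2) *
    Real.exp (-(1 / 4) *
      (Real.tanh t * ‖x + y‖ ^ 2 + (Real.cosh t / Real.sinh t) * ‖x - y‖ ^ 2))


/-- The partial derivative `∂k_t^0/∂y_j (x,y)` of the Mehler kernel in the `j`-th
coordinate of the second variable. -/
noncomputable def mehlerPartialY (d : ℕ) (t : ℝ) (j : Fin d)
    (x y : EuclideanSpace ℝ (Fin d)) : ℝ :=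
  fderiv ℝ (fun z => mehlerKernel d t x z) y (EuclideanSpace.single j 1)

namespace Real

lemma sinh_le_mul_cosh {t : ℝ} (ht : 0 ≤ t) : sinh t ≤ t * cosh t := by
  rcases ht.eq_or_lt with rfl | ht
  · simp
  obtain ⟨ξ, hξ, hslope⟩ := exists_hasDerivAt_eq_slope sinh cosh ht
    continuous_sinh.continuousOn fun s _ => hasDerivAt_sinh s
  rw [sinh_zero, sub_zero, sub_zero, eq_div_iff ht.ne'] at hslope
  rw [← hslope, mul_comm]
  gcongr
  rw [cosh_le_cosh, abs_of_pos hξ.1, abs_of_pos ht]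
  exact hξ.2.le

lemma tanh_pos {t : ℝ} (ht : 0 < t) : 0 < tanh t := by
  rw [tanh_eq_sinh_div_cosh]
  exact div_pos (sinh_pos_iff.2 ht) (cosh_pos t)

lemma tanh_mul_coth {t : ℝ} (ht : 0 < t) : tanh t * (cosh t / sinh t) = 1 := by
  have := (sinh_pos_iff.2 ht).ne'
  have := (cosh_pos t).ne'
  rw [tanh_eq_sinh_div_cosh]
  field_simp

lemma inv_le_coth {t : ℝ} (ht : 0 < t) : t⁻¹ ≤ cosh t / sinh t := by
  rw [inv_eq_one_div, div_le_div_iff₀ ht (sinh_pos_iff.2 ht), one_mul, mul_comm]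
  exact sinh_le_mul_cosh ht.le

lemma cosh_le_two {t : ℝ} (ht : |t| ≤ 1) : cosh t ≤ 2 := by
  calc cosh t ≤ cosh 1 := cosh_le_cosh.2 (by simpa using ht)
    _ = (exp 1 + exp (-1)) / 2 := cosh_eq 1
    _ ≤ 2 := by
      have := exp_one_lt_three
      have : exp (-1) ≤ 1 := exp_le_one_iff.2 (by norm_num)
      linarith

lemma coth_le_two_div {t : ℝ} (ht : 0 < t) (ht1 : t ≤ 1) : cosh t / sinh t ≤ 2 / t := by
  rw [div_le_div_iff₀ (sinh_pos_iff.2 ht) ht]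
  have := cosh_le_two (abs_le.2 ⟨by linarith, ht1⟩)
  nlinarith [self_le_sinh_iff.2 ht.le, cosh_pos t]

lemma mul_exp_neg_div_le {c : ℝ} (hc : 0 < c) (r : ℝ) : r * exp (-(r / c)) ≤ c := by
  have : r ≤ c * exp (r / c) := by
    have := add_one_le_exp (r / c)
    rw [← div_le_iff₀' hc]
    linarith
  calc r * exp (-(r / c)) ≤ c * exp (r / c) * exp (-(r / c)) := by gcongr
    _ = c := by rw [mul_assoc, ← exp_add, add_neg_cancel, exp_zero, mul_one]

end Real

lemma two_mul_mul_le_mul_sq_add_mul_sq {τ κ : ℝ} (hτ : 0 < τ) (hτκ : 1 ≤ τ * κ) (u v : ℝ) :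
    2 * (u * v) ≤ τ * u ^ 2 + κ * v ^ 2 := by
  have : 0 ≤ τ * (τ * u ^ 2 + κ * v ^ 2 - 2 * (u * v)) := by
    nlinarith [sq_nonneg (τ * u - v), sq_nonneg v]
  linarith [(mul_nonneg_iff_of_pos_left hτ).1 this]

lemma add_mul_add_mul_le_one_add_mul {τ κ u v : ℝ} (hτ : 0 < τ) (hτκ : τ * κ = 1) (hκ : 1 ≤ κ)
    (hu : 0 ≤ u) (hv : 0 ≤ v) :
    (u + v) * (τ * u + κ * v) ≤ (1 + κ) * (τ * u ^ 2 + κ * v ^ 2) := by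
  have hτle : τ ≤ κ := by nlinarith
  have := two_mul_mul_le_mul_sq_add_mul_sq hτ hτκ.ge u v
  nlinarith [mul_nonneg hu hv]

lemma add_mul_add_mul_mul_exp_le {τ κ u v : ℝ} (hτ : 0 < τ) (hτκ : τ * κ = 1) (hκ : 1 ≤ κ)
    (hu : 0 ≤ u) (hv : 0 ≤ v) :
    (u + v) * (τ * u + κ * v) * exp (-(1 / 4) * (τ * u ^ 2 + κ * v ^ 2)) ≤
      8 * (1 + κ) * exp (-(κ * v ^ 2 / 8)) := by
  set R := τ * u ^ 2 + κ * v ^ 2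
  have hτu : 0 ≤ τ * u ^ 2 := by positivity
  calc (u + v) * (τ * u + κ * v) * exp (-(1 / 4) * R)
      ≤ (1 + κ) * R * exp (-(1 / 4) * R) :=
        mul_le_mul_of_nonneg_right (add_mul_add_mul_le_one_add_mul hτ hτκ hκ hu hv) (exp_pos _).le
    _ = (1 + κ) * (R * exp (-(R / 8))) * exp (-(R / 8)) := by
        rw [mul_assoc (1 + κ), mul_assoc, mul_assoc, ← exp_add]; ring_nf
    _ ≤ (1 + κ) * 8 * exp (-(κ * v ^ 2 / 8)) := by
        gcongr
        · exact mul_exp_neg_div_le (by norm_num) R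
        · linarith
    _ = 8 * (1 + κ) * exp (-(κ * v ^ 2 / 8)) := by ring

lemma EuclideanSpace.abs_apply_le_norm {ι : Type*} [Fintype ι] (x : EuclideanSpace ℝ ι) (j : ι) :
    |x j| ≤ ‖x‖ :=
  (Real.norm_eq_abs _).symm.trans_le (PiLp.norm_apply_le x j)

lemma EuclideanSpace.abs_apply_le_half_norm_add_add_norm_sub {ι : Type*} [Fintype ι]
    (x y : EuclideanSpace ℝ ι) (j : ι) : |y j| ≤ (‖x + y‖ + ‖x - y‖) / 2 := by
  have hy : y j = ((x + y) j - (x - y) j) / 2 := by simp only [PiLp.add_apply, PiLp.sub_apply]; ring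
  rw [hy, abs_div, abs_two]
  gcongr
  exact (abs_sub _ _).trans (add_le_add (abs_apply_le_norm _ j) (abs_apply_le_norm _ j))

section MehlerKernel

variable {d : ℕ} {t : ℝ}

lemma mehlerPartialY_eq (t : ℝ) (i : Fin d) (x y : EuclideanSpace ℝ (Fin d)) :
    mehlerPartialY d t i x y = mehlerKernel d t x y *
      (-(1 / 2) * (tanh t * (x + y) i - (cosh t / sinh t) * (x - y) i)) := by
  have hplus : HasFDerivAt (fun z : EuclideanSpace ℝ (Fin d) => ‖x + z‖ ^ 2)
      (2 • (innerSL ℝ (x + y)).comp (ContinuousLinearMap.id ℝ _)) y :=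
    ((hasFDerivAt_id y).const_add x).norm_sq
  have hminus : HasFDerivAt (fun z : EuclideanSpace ℝ (Fin d) => ‖x - z‖ ^ 2)
      (2 • (innerSL ℝ (x - y)).comp (-(ContinuousLinearMap.id ℝ _))) y :=
    ((hasFDerivAt_id y).const_sub x).norm_sq
  have hker := ((((hplus.const_mul (tanh t)).add (hminus.const_mul (cosh t / sinh t))).const_mul
    (-(1 / 4 : ℝ))).exp).const_mul ((2 * π * sinh (2 * t)) ^ (-(d : ℝ) / 2))
  simp only [Pi.add_apply] at hker
  simp only [mehlerPartialY, mehlerKernel]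
  rw [hker.fderiv]
  simp only [ContinuousLinearMap.comp_id, ContinuousLinearMap.comp_neg, add_apply, neg_apply,
    smul_apply, coe_innerSL_apply, EuclideanSpace.inner_single_right, ringHom_apply,
    one_mul, nsmul_eq_mul, Nat.cast_ofNat, smul_eq_mul, PiLp.add_apply, PiLp.sub_apply]
  ring

lemma mehlerKernel_nonneg (ht : 0 ≤ t) (x y : EuclideanSpace ℝ (Fin d)) :
    0 ≤ mehlerKernel d t x y := by
  have : 0 ≤ sinh (2 * t) := sinh_nonneg_iff.2 (by linarith)
  unfold mehlerKernel
  positivity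

lemma abs_mehlerPartialY_le (ht : 0 ≤ t) (i : Fin d) (x y : EuclideanSpace ℝ (Fin d)) :
    |mehlerPartialY d t i x y| ≤
      mehlerKernel d t x y * ((tanh t * ‖x + y‖ + (cosh t / sinh t) * ‖x - y‖) / 2) := by
  have hτ : 0 ≤ tanh t := by
    rw [tanh_eq_sinh_div_cosh]; exact div_nonneg (sinh_nonneg_iff.2 ht) (cosh_pos t).le
  have hκ : 0 ≤ cosh t / sinh t := div_nonneg (cosh_pos t).le (sinh_nonneg_iff.2 ht)
  rw [mehlerPartialY_eq, abs_mul, abs_of_nonneg (mehlerKernel_nonneg ht x y)]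
  refine mul_le_mul_of_nonneg_left ?_ (mehlerKernel_nonneg ht x y)
  rw [abs_mul, abs_neg, abs_of_pos (by norm_num : (0 : ℝ) < 1 / 2), one_div_mul_eq_div]
  gcongr
  refine (abs_sub _ _).trans (add_le_add ?_ ?_) <;>
    rw [abs_mul, abs_of_nonneg ‹_›] <;> gcongr <;> exact EuclideanSpace.abs_apply_le_norm _ _

lemma abs_apply_mul_mehlerPartialY_le (ht : 0 ≤ t) (i j : Fin d) (x y : EuclideanSpace ℝ (Fin d)) :
    |y j * mehlerPartialY d t i x y| ≤ (2 * π * sinh (2 * t)) ^ (-(d : ℝ) / 2) / 4 *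
      ((‖x + y‖ + ‖x - y‖) * (tanh t * ‖x + y‖ + (cosh t / sinh t) * ‖x - y‖) *
        exp (-(1 / 4) * (tanh t * ‖x + y‖ ^ 2 + (cosh t / sinh t) * ‖x - y‖ ^ 2))) := by
  rw [abs_mul]
  calc |y j| * |mehlerPartialY d t i x y|
      ≤ (‖x + y‖ + ‖x - y‖) / 2 *
          (mehlerKernel d t x y * ((tanh t * ‖x + y‖ + (cosh t / sinh t) * ‖x - y‖) / 2)) :=
        mul_le_mul (EuclideanSpace.abs_apply_le_half_norm_add_add_norm_sub x y j)
          (abs_mehlerPartialY_le ht i x y) (abs_nonneg _) (by positivity)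
    _ = _ := by unfold mehlerKernel; ring

lemma mehlerPrefactor_le (ht : 0 < t) :
    (2 * π * sinh (2 * t)) ^ (-(d : ℝ) / 2) ≤ (4 * π) ^ (-(d : ℝ) / 2) * t ^ (-(d : ℝ) / 2) := by
  rw [← mul_rpow (by positivity) ht.le]
  apply rpow_le_rpow_of_nonpos (by positivity)
  · nlinarith [pi_pos, self_le_sinh_iff.2 (by linarith : 0 ≤ 2 * t)]
  · have : (0 : ℝ) ≤ d := Nat.cast_nonneg d
    linarith

end MehlerKernel

theorem mehlerKernel_coord_deriv_bound_small_time_general (d : ℕ) :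
    ∃ C > (0 : ℝ), ∃ a > (0 : ℝ), ∀ t : ℝ, 0 < t → t ≤ 1 →
      ∀ x y : EuclideanSpace ℝ (Fin d), ∀ i j : Fin d,
        |y j * mehlerPartialY d t i x y| ≤
          C * t ^ (-(d : ℝ) / 2 - 1) * Real.exp (-(a / t) * ‖x - y‖ ^ 2) := by
  refine ⟨6 * (4 * π) ^ (-(d : ℝ) / 2), by positivity, 1 / 8, by norm_num, ?_⟩
  intro t ht ht1 x y i j
  set κ := cosh t / sinh t
  have hκ_ge : t⁻¹ ≤ κ := inv_le_coth ht
  have hκ_le : κ ≤ 2 / t := coth_le_two_div ht ht1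
  have ht_inv : 1 ≤ t⁻¹ := one_le_inv_iff₀.2 ⟨ht, ht1⟩
  calc |y j * mehlerPartialY d t i x y|
      ≤ _ := abs_apply_mul_mehlerPartialY_le ht.le i j x y
    _ ≤ (4 * π) ^ (-(d : ℝ) / 2) * t ^ (-(d : ℝ) / 2) / 4 *
          (8 * (1 + κ) * exp (-(κ * ‖x - y‖ ^ 2 / 8))) := by
        refine mul_le_mul (by gcongr; exact mehlerPrefactor_le ht)
          (add_mul_add_mul_mul_exp_le (tanh_pos ht) (tanh_mul_coth ht) (ht_inv.trans hκ_ge)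
            (norm_nonneg _) (norm_nonneg _)) ?_ (by positivity)
        have := tanh_pos ht
        positivity
    _ ≤ (4 * π) ^ (-(d : ℝ) / 2) * t ^ (-(d : ℝ) / 2) / 4 *
          (8 * (3 / t) * exp (-(1 / 8 / t) * ‖x - y‖ ^ 2)) := by
        gcongr _ * (8 * ?_ * exp ?_)
        · rw [show 3 / t = t⁻¹ + 2 / t by ring]; linarith
        · have := mul_le_mul_of_nonneg_right hκ_ge (sq_nonneg ‖x - y‖)
          rw [show 1 / 8 / t = t⁻¹ / 8 by ring]; linarith
    _ = 6 * (4 * π) ^ (-(d : ℝ) / 2) * t ^ (-(d : ℝ) / 2 - 1) *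
          exp (-(1 / 8 / t) * ‖x - y‖ ^ 2) := by
        rw [rpow_sub ht, rpow_one]; ring

/-- There exist `C > 0` and `a > 0` such that for all `0 < t ≤ 1`, all `x, y ∈ ℝ^d` and
all `1 ≤ i, j ≤ d`, `|y_j ∂k_t^0/∂y_i (x,y)| ≤ C t^{-d/2-1} e^{-(a/t)|x-y|²}`. -/
theorem mehlerKernel_coord_deriv_bound_small_time (d : ℕ) (hd : 1 ≤ d) :
    ∃ C > (0 : ℝ), ∃ a > (0 : ℝ), ∀ t : ℝ, 0 < t → t ≤ 1 →
      ∀ x y : EuclideanSpace ℝ (Fin d), ∀ i j : Fin d,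
        |y j * mehlerPartialY d t i x y| ≤
          C * t ^ (-(d : ℝ) / 2 - 1) * Real.exp (-(a / t) * ‖x - y‖ ^ 2) :=
  mehlerKernel_coord_deriv_bound_small_time_general d
end

section
/- There exists a constant C > 0 such that for all 0 < t ≤ 1, all x, y ∈ ℝ^d and all 1 ≤ j ≤ d, the following three estimates hold: |(y_j − x_j)² k_t^0(x,y)| ≤ C t^{−d/2} e^{−|x−y|²/(8t)}, |(y_j + x_j)² k_t^0(x,y)| ≤ C t^{−d/2−1} e^{−|x−y|²/(4t)}, and |(y_j + x_j)(y_j − x_j) k_t^0(x,y)| ≤ C t^{−d/2−1/2} e^{−|x−y|²/(8t)}. -/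
/-!
For `0 < t ≤ 1` we have `sinh 2t ≥ 2t`, `tanh t ≥ t / 2` and `coth t ≥ 1 / t`, so the Mehler
kernel is dominated by `(4πt)^{-d/2} e^{-t|x+y|²/8} e^{-|x-y|²/(4t)}`. The polynomial factors are
then absorbed by the Gaussian factors through `a e^{-ca} ≤ 1/c`: `|x-y|²` uses up half of the
exponent `|x-y|²/(4t)`, `|x+y|²` costs a factor `1/t`, and the mixed term reduces to the other two
by `√t |x+y| |x-y| ≤ (t|x+y|² + |x-y|²) / 2`.
-/

open Real

namespace Real

lemma mul_exp_neg_mul_le_inv {a c : ℝ} (hc : 0 < c) : a * exp (-(c * a)) ≤ c⁻¹ := by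
  rw [exp_neg, ← div_eq_mul_inv, div_le_iff₀ (exp_pos _), ← div_eq_inv_mul, le_div_iff₀ hc]
  linarith [add_one_le_exp (c * a)]

lemma cosh_one_lt_two : cosh 1 < 2 := by
  have h₁ := exp_one_lt_d9
  have h₂ : exp (-1) < 1 := exp_lt_one_iff.mpr (by norm_num)
  rw [cosh_eq]
  linarith

lemma half_le_tanh {t : ℝ} (ht : 0 ≤ t) (ht1 : t ≤ 1) : t / 2 ≤ tanh t := by
  have hcosh : cosh t < 2 :=
    (cosh_le_cosh.mpr (by rwa [abs_of_nonneg ht, abs_one])).trans_lt cosh_one_lt_two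
  rw [tanh_eq_sinh_div_cosh, le_div_iff₀ (cosh_pos t)]
  nlinarith [self_le_sinh_iff.mpr ht]

end Real

section GaussianWeight

variable {t : ℝ} (p s : ℝ)

lemma sq_mul_exp_le_of_le_one (ht : 0 < t) (ht1 : t ≤ 1) :
    s ^ 2 * (exp (-(t / 8 * p ^ 2)) * exp (-s ^ 2 / (4 * t))) ≤ 8 * exp (-s ^ 2 / (8 * t)) := by
  have hp : exp (-(t / 8 * p ^ 2)) ≤ 1 := exp_le_one_iff.mpr (by nlinarith [sq_nonneg p])
  have hhalf : exp (-s ^ 2 / (4 * t)) = exp (-(1 / (8 * t) * s ^ 2)) * exp (-s ^ 2 / (8 * t)) := by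
    rw [← exp_add]; congr 1; field_simp; ring
  calc s ^ 2 * (exp (-(t / 8 * p ^ 2)) * exp (-s ^ 2 / (4 * t)))
      ≤ s ^ 2 * exp (-s ^ 2 / (4 * t)) := by gcongr; exact mul_le_of_le_one_left (exp_pos _).le hp
    _ = s ^ 2 * exp (-(1 / (8 * t) * s ^ 2)) * exp (-s ^ 2 / (8 * t)) := by
        rw [hhalf, mul_assoc]
    _ ≤ (1 / (8 * t))⁻¹ * exp (-s ^ 2 / (8 * t)) := by
        gcongr; exact mul_exp_neg_mul_le_inv (by positivity)
    _ ≤ 8 * exp (-s ^ 2 / (8 * t)) := by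
        rw [one_div, inv_inv]; gcongr; linarith

lemma sq_mul_exp_le_div (ht : 0 < t) :
    p ^ 2 * (exp (-(t / 8 * p ^ 2)) * exp (-s ^ 2 / (4 * t))) ≤ 8 / t * exp (-s ^ 2 / (4 * t)) :=
  calc p ^ 2 * (exp (-(t / 8 * p ^ 2)) * exp (-s ^ 2 / (4 * t)))
      = p ^ 2 * exp (-(t / 8 * p ^ 2)) * exp (-s ^ 2 / (4 * t)) := by ring
    _ ≤ (t / 8)⁻¹ * exp (-s ^ 2 / (4 * t)) := by
        gcongr; exact mul_exp_neg_mul_le_inv (by positivity)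
    _ = 8 / t * exp (-s ^ 2 / (4 * t)) := by rw [inv_div]

lemma mul_mul_exp_le_div_sqrt (ht : 0 < t) (ht1 : t ≤ 1) :
    p * s * (exp (-(t / 8 * p ^ 2)) * exp (-s ^ 2 / (4 * t))) ≤
      8 / √t * exp (-s ^ 2 / (8 * t)) := by
  set W := exp (-(t / 8 * p ^ 2)) * exp (-s ^ 2 / (4 * t))
  have hamgm : √t * (p * s) ≤ (t * p ^ 2 + s ^ 2) / 2 := by
    nlinarith [sq_nonneg (√t * p - s), sq_sqrt ht.le]
  have hslower : exp (-s ^ 2 / (4 * t)) ≤ exp (-s ^ 2 / (8 * t)) := by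
    gcongr exp ?_
    rw [neg_div, neg_div, neg_le_neg_iff]
    gcongr; linarith
  rw [div_mul_eq_mul_div, le_div_iff₀ (sqrt_pos.mpr ht)]
  calc p * s * W * √t = √t * (p * s) * W := by ring
    _ ≤ (t * p ^ 2 + s ^ 2) / 2 * W := by gcongr
    _ = (t * (p ^ 2 * W) + s ^ 2 * W) / 2 := by ring
    _ ≤ (t * (8 / t * exp (-s ^ 2 / (4 * t))) + 8 * exp (-s ^ 2 / (8 * t))) / 2 := by
        gcongr (t * ?_ + ?_) / 2
        · exact sq_mul_exp_le_div p s ht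
        · exact sq_mul_exp_le_of_le_one p s ht ht1
    _ ≤ 8 * exp (-s ^ 2 / (8 * t)) := by
        rw [← mul_assoc, mul_div_cancel₀ (8 : ℝ) ht.ne']; linarith

end GaussianWeight

section MehlerKernel

variable {d : ℕ} {t : ℝ} (x y : EuclideanSpace ℝ (Fin d))

lemma mehlerKernel_pos (ht : 0 < t) : 0 < mehlerKernel d t x y := by
  have : 0 < sinh (2 * t) := sinh_pos_iff.mpr (by linarith)
  unfold mehlerKernel
  positivity

lemma mehlerKernel_le (ht : 0 < t) (ht1 : t ≤ 1) :
    mehlerKernel d t x y ≤ (4 * π * t) ^ (-(d : ℝ) / 2) *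
      (exp (-(t / 8 * ‖x + y‖ ^ 2)) * exp (-‖x - y‖ ^ 2 / (4 * t))) := by
  have hprefactor :
      (2 * π * sinh (2 * t)) ^ (-(d : ℝ) / 2) ≤ (4 * π * t) ^ (-(d : ℝ) / 2) := by
    apply rpow_le_rpow_of_nonpos (by positivity)
    · nlinarith [pi_pos, self_le_sinh_iff.mpr (by linarith : 0 ≤ 2 * t)]
    · linarith [d.cast_nonneg (α := ℝ)]
  have hcoth : 1 / t ≤ cosh t / sinh t := by
    rw [div_le_div_iff₀ ht (sinh_pos_iff.mpr ht)]
    linarith [sinh_le_mul_cosh ht.le]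
  have hexponent : -(1 / 4) * (tanh t * ‖x + y‖ ^ 2 + cosh t / sinh t * ‖x - y‖ ^ 2) ≤
      -(t / 8 * ‖x + y‖ ^ 2) + -‖x - y‖ ^ 2 / (4 * t) := by
    have hsum := mul_le_mul_of_nonneg_right (half_le_tanh ht.le ht1) (sq_nonneg ‖x + y‖)
    have hdiff := mul_le_mul_of_nonneg_right hcoth (sq_nonneg ‖x - y‖)
    have : -‖x - y‖ ^ 2 / (4 * t) = -(1 / t * ‖x - y‖ ^ 2) / 4 := by ring
    linarith
  rw [mehlerKernel, ← exp_add]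
  exact mul_le_mul hprefactor (exp_le_exp.mpr hexponent) (exp_pos _).le (by positivity)

lemma mul_mehlerKernel_le (ht : 0 < t) (ht1 : t ≤ 1) {a : ℝ} (ha : 0 ≤ a) :
    a * mehlerKernel d t x y ≤ (4 * π) ^ (-(d : ℝ) / 2) * t ^ (-(d : ℝ) / 2) *
      (a * (exp (-(t / 8 * ‖x + y‖ ^ 2)) * exp (-‖x - y‖ ^ 2 / (4 * t)))) :=
  calc a * mehlerKernel d t x y
      ≤ a * ((4 * π * t) ^ (-(d : ℝ) / 2) *
          (exp (-(t / 8 * ‖x + y‖ ^ 2)) * exp (-‖x - y‖ ^ 2 / (4 * t)))) :=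
        mul_le_mul_of_nonneg_left (mehlerKernel_le x y ht ht1) ha
    _ = _ := by rw [mul_rpow (by positivity) ht.le]; ring

lemma norm_sub_sq_mul_mehlerKernel_le (ht : 0 < t) (ht1 : t ≤ 1) :
    ‖x - y‖ ^ 2 * mehlerKernel d t x y ≤
      8 * (4 * π) ^ (-(d : ℝ) / 2) * t ^ (-(d : ℝ) / 2) * exp (-‖x - y‖ ^ 2 / (8 * t)) :=
  calc ‖x - y‖ ^ 2 * mehlerKernel d t x y
      ≤ (4 * π) ^ (-(d : ℝ) / 2) * t ^ (-(d : ℝ) / 2) *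
          (8 * exp (-‖x - y‖ ^ 2 / (8 * t))) :=
        (mul_mehlerKernel_le x y ht ht1 (sq_nonneg _)).trans <|
          mul_le_mul_of_nonneg_left (sq_mul_exp_le_of_le_one _ _ ht ht1) (by positivity)
    _ = _ := by ring

lemma norm_add_sq_mul_mehlerKernel_le (ht : 0 < t) (ht1 : t ≤ 1) :
    ‖x + y‖ ^ 2 * mehlerKernel d t x y ≤
      8 * (4 * π) ^ (-(d : ℝ) / 2) * t ^ (-(d : ℝ) / 2 - 1) *
        exp (-‖x - y‖ ^ 2 / (4 * t)) :=
  calc ‖x + y‖ ^ 2 * mehlerKernel d t x y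
      ≤ (4 * π) ^ (-(d : ℝ) / 2) * t ^ (-(d : ℝ) / 2) *
          (8 / t * exp (-‖x - y‖ ^ 2 / (4 * t))) :=
        (mul_mehlerKernel_le x y ht ht1 (sq_nonneg _)).trans <|
          mul_le_mul_of_nonneg_left (sq_mul_exp_le_div _ _ ht) (by positivity)
    _ = _ := by rw [rpow_sub_one ht.ne']; ring

lemma norm_add_mul_norm_sub_mul_mehlerKernel_le (ht : 0 < t) (ht1 : t ≤ 1) :
    ‖x + y‖ * ‖x - y‖ * mehlerKernel d t x y ≤
      8 * (4 * π) ^ (-(d : ℝ) / 2) * t ^ (-(d : ℝ) / 2 - 1 / 2) *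
        exp (-‖x - y‖ ^ 2 / (8 * t)) :=
  calc ‖x + y‖ * ‖x - y‖ * mehlerKernel d t x y
      ≤ (4 * π) ^ (-(d : ℝ) / 2) * t ^ (-(d : ℝ) / 2) *
          (8 / √t * exp (-‖x - y‖ ^ 2 / (8 * t))) :=
        (mul_mehlerKernel_le x y ht ht1 (by positivity)).trans <|
          mul_le_mul_of_nonneg_left (mul_mul_exp_le_div_sqrt _ _ ht ht1) (by positivity)
    _ = _ := by rw [rpow_sub ht, sqrt_eq_rpow]; ring

end MehlerKernel

theorem mehlerKernel_quadratic_bounds_general (d : ℕ) :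
    ∃ C > (0 : ℝ), ∀ t : ℝ, 0 < t → t ≤ 1 →
      ∀ x y : EuclideanSpace ℝ (Fin d), ∀ j : Fin d,
        |(y j - x j) ^ 2 * mehlerKernel d t x y| ≤
            C * t ^ (-(d : ℝ) / 2) * Real.exp (-‖x - y‖ ^ 2 / (8 * t)) ∧
        |(y j + x j) ^ 2 * mehlerKernel d t x y| ≤
            C * t ^ (-(d : ℝ) / 2 - 1) * Real.exp (-‖x - y‖ ^ 2 / (4 * t)) ∧
        |(y j + x j) * (y j - x j) * mehlerKernel d t x y| ≤
            C * t ^ (-(d : ℝ) / 2 - 1 / 2) * Real.exp (-‖x - y‖ ^ 2 / (8 * t)) := by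
  refine ⟨8 * (4 * π) ^ (-(d : ℝ) / 2), by positivity, fun t ht ht1 x y j => ?_⟩
  have hK := (mehlerKernel_pos x y ht).le
  have hsub : |y j - x j| ≤ ‖x - y‖ := by
    simpa [abs_sub_comm] using PiLp.norm_apply_le (x - y) j
  have hadd : |y j + x j| ≤ ‖x + y‖ := by
    simpa [add_comm] using PiLp.norm_apply_le (x + y) j
  refine ⟨?_, ?_, ?_⟩
  · calc _ = |y j - x j| ^ 2 * mehlerKernel d t x y := by
          rw [abs_mul, abs_pow, abs_of_nonneg hK]
      _ ≤ ‖x - y‖ ^ 2 * mehlerKernel d t x y := by gcongr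
      _ ≤ _ := norm_sub_sq_mul_mehlerKernel_le x y ht ht1
  · calc _ = |y j + x j| ^ 2 * mehlerKernel d t x y := by
          rw [abs_mul, abs_pow, abs_of_nonneg hK]
      _ ≤ ‖x + y‖ ^ 2 * mehlerKernel d t x y := by gcongr
      _ ≤ _ := norm_add_sq_mul_mehlerKernel_le x y ht ht1
  · calc _ = |y j + x j| * |y j - x j| * mehlerKernel d t x y := by
          rw [abs_mul, abs_mul, abs_of_nonneg hK]
      _ ≤ ‖x + y‖ * ‖x - y‖ * mehlerKernel d t x y := by gcongr
      _ ≤ _ := norm_add_mul_norm_sub_mul_mehlerKernel_le x y ht ht1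

/-- There exists `C > 0` such that for all `0 < t ≤ 1`, all `x, y ∈ ℝ^d` and all
`1 ≤ j ≤ d`, the three quadratic-factor estimates on the Mehler kernel hold. -/
theorem mehlerKernel_quadratic_bounds (d : ℕ) (hd : 1 ≤ d) :
    ∃ C > (0 : ℝ), ∀ t : ℝ, 0 < t → t ≤ 1 →
      ∀ x y : EuclideanSpace ℝ (Fin d), ∀ j : Fin d,
        |(y j - x j) ^ 2 * mehlerKernel d t x y| ≤
            C * t ^ (-(d : ℝ) / 2) * Real.exp (-‖x - y‖ ^ 2 / (8 * t)) ∧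
        |(y j + x j) ^ 2 * mehlerKernel d t x y| ≤
            C * t ^ (-(d : ℝ) / 2 - 1) * Real.exp (-‖x - y‖ ^ 2 / (4 * t)) ∧
        |(y j + x j) * (y j - x j) * mehlerKernel d t x y| ≤
            C * t ^ (-(d : ℝ) / 2 - 1 / 2) * Real.exp (-‖x - y‖ ^ 2 / (8 * t)) :=
  mehlerKernel_quadratic_bounds_general d
end
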